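/- arXiv:1608.02132 — 4 statements merged into one kernel-verified Lean document; each statement's English description precedes it below -/
import Mathlib

section
/- For 0 < p ≤ 1/2, the function q ↦ 2·H(q) + D(q‖p) on [0,1] attains its maximum at q = 1 - p, and the maximum value is 2·H(p) + D(1-p‖p). -/
open Real Set

/-- Binary Shannon entropy (base 2), with the convention 0 · log 0 = 0. -/
noncomputable def H (q : ℝ) : ℝ := -(q * Real.logb 2 q) - (1 - q) * Real.logb 2 (1 - q)

/-- Binary Kullback–Leibler divergence (base 2), with the convention 0 · log 0 = 0. -/
noncomputable def D (q p : ℝ) : ℝ :=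
  q * Real.logb 2 (q / p) + (1 - q) * Real.logb 2 ((1 - q) / (1 - p))

lemma mul_log_div_le (q r : ℝ) (hq : 0 ≤ q) (hr : 0 < r) :
    q * Real.log (r / q) ≤ r - q := by
  rcases eq_or_lt_of_le hq with h | h
  · subst h; simp [hr.le]
  · have hpos : 0 < r / q := div_pos hr h
    have h1 := Real.log_le_sub_one_of_pos hpos
    have h2 : q * Real.log (r / q) ≤ q * (r / q - 1) := by nlinarith
    have h3 : q * (r / q - 1) = r - q := by field_simp
    linarith

lemma kl_nat_nonneg (q r : ℝ) (hq0 : 0 ≤ q) (hq1 : q ≤ 1) (hr0 : 0 < r) (hr1 : r < 1) :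
    0 ≤ q * Real.log (q / r) + (1 - q) * Real.log ((1 - q) / (1 - r)) := by
  have h1 : q * Real.log (r / q) ≤ r - q := mul_log_div_le q r hq0 hr0
  have h2 : (1 - q) * Real.log ((1 - r) / (1 - q)) ≤ (1 - r) - (1 - q) :=
    mul_log_div_le (1 - q) (1 - r) (by linarith) (by linarith)
  have e1 : q * Real.log (q / r) = -(q * Real.log (r / q)) := by
    rcases eq_or_lt_of_le hq0 with h | h
    · simp [← h]
    · rw [Real.log_div (ne_of_gt h) (ne_of_gt hr0),
        Real.log_div (ne_of_gt hr0) (ne_of_gt h)]; ring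
  have e2 : (1 - q) * Real.log ((1 - q) / (1 - r)) = -((1 - q) * Real.log ((1 - r) / (1 - q))) := by
    rcases eq_or_lt_of_le (show (0:ℝ) ≤ 1 - q by linarith) with h | h
    · rw [← h]; simp
    · rw [Real.log_div (ne_of_gt h) (ne_of_gt (show (0:ℝ) < 1 - r by linarith)),
        Real.log_div (ne_of_gt (show (0:ℝ) < 1 - r by linarith)) (ne_of_gt h)]; ring
  linarith

lemma D_nonneg' (q r : ℝ) (hq0 : 0 ≤ q) (hq1 : q ≤ 1) (hr0 : 0 < r) (hr1 : r < 1) :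
    0 ≤ D q r := by
  have h := kl_nat_nonneg q r hq0 hq1 hr0 hr1
  have hl2 : (0:ℝ) < Real.log 2 := Real.log_pos (by norm_num)
  have hD : D q r = (q * Real.log (q / r) + (1 - q) * Real.log ((1 - q) / (1 - r))) / Real.log 2 := by
    unfold D Real.logb; ring
  rw [hD]
  exact div_nonneg h hl2.le

lemma key_id (p q : ℝ) (hp0 : 0 < p) (hp1 : p < 1) (hq0 : 0 ≤ q) (hq1 : q ≤ 1) :
    2 * H q + D q p + D q (1 - p) = -(Real.logb 2 p + Real.logb 2 (1 - p)) := by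
  have hp1' : (0:ℝ) < 1 - p := by linarith
  have e : (1:ℝ) - (1 - p) = p := by ring
  rcases eq_or_lt_of_le hq0 with h0 | h0
  · subst h0
    simp [H, D, e, Real.logb_div (one_ne_zero) (ne_of_gt hp1'),
      Real.logb_div (one_ne_zero) (ne_of_gt hp0)]
  · rcases eq_or_lt_of_le hq1 with h1 | h1
    · subst h1
      simp [H, D, e, Real.logb_div (one_ne_zero) (ne_of_gt hp1'),
        Real.logb_div (one_ne_zero) (ne_of_gt hp0)]
      ring
    · have hq1' : (0:ℝ) < 1 - q := by linarith
      unfold H D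
      rw [e, Real.logb_div (ne_of_gt h0) (ne_of_gt hp0),
        Real.logb_div (ne_of_gt hq1') (ne_of_gt hp1'),
        Real.logb_div (ne_of_gt h0) (ne_of_gt hp1'),
        Real.logb_div (ne_of_gt hq1') (ne_of_gt hp0)]
      ring

theorem stmt_0 (p : ℝ) (hp : 0 < p) (hp2 : p ≤ 1/2) :
    (∀ q ∈ Icc (0:ℝ) 1, 2 * H q + D q p ≤ 2 * H (1 - p) + D (1 - p) p) ∧
    2 * H (1 - p) + D (1 - p) p = 2 * H p + D (1 - p) p := by
  have hp1 : p < 1 := by linarith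
  have e : (1:ℝ) - (1 - p) = p := by ring
  constructor
  · intro q hq
    obtain ⟨hq0, hq1⟩ := hq
    have h1 := key_id p q hp hp1 hq0 hq1
    have h2 := key_id p (1 - p) hp hp1 (by linarith) (by linarith)
    have h3 : D (1 - p) (1 - p) = 0 := by
      unfold D
      rw [e, div_self (ne_of_gt (show (0:ℝ) < 1 - p by linarith)),
        div_self (ne_of_gt hp)]
      simp
    have h4 := D_nonneg' q (1 - p) hq0 hq1 (by linarith) (by linarith)
    linarith
  · rw [H, H, e]; ring
end

section
/- For 0 < p ≤ 1/2, the function f(p) = 2·H(p) + D(1-p‖p) is monotonically decreasing in p, is unbounded as p → 0⁺, and satisfies f(1/2) = 2. -/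
open Real Set

lemma two_mul_H_add_D_one_sub_eq {p : ℝ} (hp₀ : p ≠ 0) (hp₁ : 1 - p ≠ 0) :
    2 * H p + D (1 - p) p = -logb 2 (p * (1 - p)) := by
  rw [H, D, sub_sub_cancel, logb_div hp₁ hp₀, logb_div hp₀ hp₁, logb_mul hp₀ hp₁]
  ring

lemma strictMonoOn_mul_one_sub : StrictMonoOn (fun p : ℝ => p * (1 - p)) (Iic (1 / 2)) := by
  intro a ha b hb hab
  simp only [mem_Iic] at ha hb
  nlinarith

lemma tendsto_mul_one_sub_nhdsGT_zero :
    Filter.Tendsto (fun p : ℝ => p * (1 - p)) (nhdsWithin 0 (Ioi 0)) (nhdsWithin 0 (Ioi 0)) := by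
  refine tendsto_nhdsWithin_iff.mpr ⟨?_, ?_⟩
  · have hcont : Continuous (fun p : ℝ => p * (1 - p)) := by fun_prop
    simpa using hcont.continuousAt.tendsto.mono_left (nhdsWithin_le_nhds (a := (0 : ℝ)))
  · filter_upwards [Ioo_mem_nhdsGT (zero_lt_one' ℝ)] with p hp
    exact mul_pos hp.1 (sub_pos.mpr hp.2)

theorem stmt_1 :
    StrictAntiOn (fun p : ℝ => 2 * H p + D (1 - p) p) (Ioc (0:ℝ) (1/2)) ∧
    Filter.Tendsto (fun p : ℝ => 2 * H p + D (1 - p) p)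
      (nhdsWithin 0 (Ioi 0)) Filter.atTop ∧
    2 * H (1/2) + D (1 - 1/2) (1/2) = 2 := by
  have closed_form {p : ℝ} (hp : p ∈ Ioo (0 : ℝ) 1) :
      2 * H p + D (1 - p) p = -logb 2 (p * (1 - p)) :=
    two_mul_H_add_D_one_sub_eq hp.1.ne' (sub_pos.mpr hp.2).ne'
  have Ioc_sub_Ioo : Ioc (0 : ℝ) (1 / 2) ⊆ Ioo 0 1 := fun p hp => ⟨hp.1, by linarith [hp.2]⟩
  refine ⟨?_, ?_, ?_⟩
  · intro a ha b hb hab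
    simp only [closed_form (Ioc_sub_Ioo ha), closed_form (Ioc_sub_Ioo hb), neg_lt_neg_iff]
    exact logb_lt_logb one_lt_two (mul_pos ha.1 (by linarith [ha.2]))
      (strictMonoOn_mul_one_sub ha.2 hb.2 hab)
  · have hlog := (tendsto_logb_nhdsGT_zero one_lt_two).comp tendsto_mul_one_sub_nhdsGT_zero
    refine (Filter.tendsto_neg_atBot_atTop.comp hlog).congr' ?_
    filter_upwards [Ioo_mem_nhdsGT (zero_lt_one' ℝ)] with p hp
    exact (closed_form hp).symm
  · rw [closed_form ⟨by norm_num, by norm_num⟩, show (1 / 2 : ℝ) * (1 - 1 / 2) = 2⁻¹ ^ 2 by norm_num,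
      logb_pow, logb_inv, logb_self_eq_one one_lt_two]
    norm_num
end

section
/- For 0 < p ≤ 1/2 and 1/2 ≤ s ≤ 1, one has H(s) + D(1-s‖p) ≤ H(s) + D(s‖p) when s ≥ 1-p, and H(s) + D(1-s‖p) ≤ 2·H(p) + D(1-p‖p) - H(s) when 1/2 ≤ s ≤ 1-p. That is, the lower bound rate for the online-attack average guesswork never exceeds the upper bound rate. -/
open Real Set

/-! Both sides of each inequality are affine in `s` once written through the cross entropy
`H q + D q p = -q log p - (1 - q) log (1 - p)`. The first claim then reduces to
`(2s - 1) (log (1 - p) - log p) ≥ 0`; for the second, the two cross entropies at `s` and `1 - s`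
sum to those at `p` and `1 - p`, so it reduces to Gibbs' inequality `D s p ≥ 0`. -/

lemma H_one_sub (q : ℝ) : H (1 - q) = H q := by
  unfold H
  ring_nf

lemma mul_logb_div (b x : ℝ) {y : ℝ} (hy : y ≠ 0) :
    x * logb b (x / y) = x * logb b x - x * logb b y := by
  rcases eq_or_ne x 0 with rfl | hx
  · simp
  · rw [logb_div hx hy, mul_sub]

lemma H_add_D (q : ℝ) {p : ℝ} (hp : p ≠ 0) (hp1 : 1 - p ≠ 0) :
    H q + D q p = -(q * logb 2 p) - (1 - q) * logb 2 (1 - p) := by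
  rw [H, D, mul_logb_div _ _ hp, mul_logb_div _ _ hp1]
  ring

lemma D_eq_klFun (q : ℝ) {p : ℝ} (hp : 0 < p) (hp1 : p < 1) :
    D q p = (p * InformationTheory.klFun (q / p)
      + (1 - p) * InformationTheory.klFun ((1 - q) / (1 - p))) / log 2 := by
  have hp1' : 1 - p ≠ 0 := by linarith
  simp only [D, logb, InformationTheory.klFun_apply]
  field_simp
  ring

lemma D_nonneg {q p : ℝ} (hq : 0 ≤ q) (hq1 : q ≤ 1) (hp : 0 < p) (hp1 : p < 1) : 0 ≤ D q p := by
  rw [D_eq_klFun q hp hp1]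
  have h1 := InformationTheory.klFun_nonneg (div_nonneg hq hp.le)
  have h2 := InformationTheory.klFun_nonneg (div_nonneg (sub_nonneg.2 hq1) (sub_pos.2 hp1).le)
  have := log_pos (by norm_num : (1 : ℝ) < 2)
  have := sub_pos.2 hp1
  positivity

theorem stmt_17 (p s : ℝ) (hp : 0 < p) (hp2 : p ≤ 1/2) (hs : 1/2 ≤ s) (hs1 : s ≤ 1) :
    (1 - p ≤ s → H s + D (1 - s) p ≤ H s + D s p) ∧
    (s ≤ 1 - p → H s + D (1 - s) p ≤ 2 * H p + D (1 - p) p - H s) := by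
  have hp1 : p < 1 := by linarith
  have hlog : logb 2 p ≤ logb 2 (1 - p) := logb_le_logb_of_le (by norm_num) hp (by linarith)
  have hcross (q : ℝ) := H_add_D q hp.ne' (by linarith : 1 - p ≠ 0)
  have hflip := hcross (1 - s)
  rw [H_one_sub] at hflip
  constructor
  · intro _
    rw [hflip, hcross s]
    linarith [mul_nonneg (by linarith : 0 ≤ 2 * s - 1) (sub_nonneg.2 hlog)]
  · intro _
    have hgibbs := D_nonneg (by linarith) hs1 hp hp1
    have hcross_s := hcross s
    have hcross_one_sub_p := hcross (1 - p)
    rw [H_one_sub] at hcross_one_sub_p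
    have hHp : H p = -(p * logb 2 p) - (1 - p) * logb 2 (1 - p) := rfl
    linarith
end

section
/- For 0 < p ≤ 1/2 and 1/2 ≤ s ≤ 1-p, it holds that H(s) + D(s‖p) ≤ 2·H(p) + D(1-p‖p) - H(s), with equality iff s = 1-p. -/
open Real Set

lemma H_symm (p : ℝ) : H (1 - p) = H p := by
  have h : (1:ℝ) - (1 - p) = p := by ring
  rw [H, H, h]; ring

lemma key_nat (p s : ℝ) (hp : 0 < p) (hp1 : p < 1) (hs0 : 0 < s) (hs1 : s < 1)
    (hne : s ≠ 1 - p) :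
    -(s * Real.log s) - (1-s) * Real.log (1-s) - s * Real.log p - (1-s) * Real.log (1-p)
      < -(Real.log p + Real.log (1-p)) := by
  have h1p : (0:ℝ) < 1 - p := by linarith
  have h1s : (0:ℝ) < 1 - s := by linarith
  have hA : Real.log ((1-p)/s) < (1-p)/s - 1 := by
    apply Real.log_lt_sub_one_of_pos (by positivity)
    intro h
    apply hne
    field_simp at h
    linarith
  have hB : Real.log (p/(1-s)) ≤ p/(1-s) - 1 :=
    Real.log_le_sub_one_of_pos (by positivity)
  have hA' := mul_lt_mul_of_pos_left hA hs0
  have hB' := mul_le_mul_of_nonneg_left hB (le_of_lt h1s)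
  rw [Real.log_div (ne_of_gt h1p) (ne_of_gt hs0)] at hA'
  rw [Real.log_div (ne_of_gt hp) (ne_of_gt h1s)] at hB'
  have e1 : s * ((1-p)/s - 1) = 1 - p - s := by field_simp
  have e2 : (1-s) * (p/(1-s) - 1) = p - (1-s) := by field_simp
  rw [e1] at hA'
  rw [e2] at hB'
  linarith

lemma key_lb (p s : ℝ) (hp : 0 < p) (hp1 : p < 1) (hs0 : 0 < s) (hs1 : s < 1)
    (hne : s ≠ 1 - p) :
    2 * H s + D s p < 2 * H p + D (1-p) p := by
  have h1p : (0:ℝ) < 1 - p := by linarith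
  have h1s : (0:ℝ) < 1 - s := by linarith
  have h2 : (0:ℝ) < Real.log 2 := Real.log_pos (by norm_num)
  have key := key_nat p s hp hp1 hs0 hs1 hne
  have hpp : (1:ℝ) - (1 - p) = p := by ring
  have eL : 2 * H s + D s p =
      (-(s * Real.log s) - (1-s) * Real.log (1-s) - s * Real.log p
        - (1-s) * Real.log (1-p)) / Real.log 2 := by
    rw [H, D, Real.logb, Real.logb, Real.logb, Real.logb,
      Real.log_div (ne_of_gt hs0) (ne_of_gt hp),
      Real.log_div (ne_of_gt h1s) (ne_of_gt h1p)]
    ring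
  have eR : 2 * H p + D (1-p) p = (-(Real.log p + Real.log (1-p))) / Real.log 2 := by
    rw [H, D, hpp, Real.logb, Real.logb, Real.logb, Real.logb,
      Real.log_div (ne_of_gt h1p) (ne_of_gt hp),
      Real.log_div (ne_of_gt hp) (ne_of_gt h1p)]
    ring
  rw [eL, eR]
  exact (div_lt_div_iff_of_pos_right h2).mpr key

theorem stmt_18 (p s : ℝ) (hp : 0 < p) (hp2 : p ≤ 1/2) (hs : 1/2 ≤ s) (hs1 : s ≤ 1 - p) :
    H s + D s p ≤ 2 * H p + D (1 - p) p - H s ∧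
    (H s + D s p = 2 * H p + D (1 - p) p - H s ↔ s = 1 - p) := by
  have hp1 : p < 1 := by linarith
  have hs0 : 0 < s := by linarith
  have hs1' : s < 1 := by linarith
  rcases eq_or_ne s (1 - p) with he | hne
  · subst he
    have hsym := H_symm p
    constructor
    · linarith
    · constructor <;> intro _ <;> [rfl; linarith]
  · have key := key_lb p s hp hp1 hs0 hs1' hne
    constructor
    · linarith
    · constructor
      · intro h; exfalso; linarith
      · intro h; exact absurd h hne
end
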